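/- For any digraph D on n vertices, either γ⁺ₘ(D) = 1 or γ⁺ₘ(D) ≤ ⌈n/2⌉ − Δ⁺(D). -/
import Mathlib


/-- Closed out-neighborhood `N⁺[S]` of a set `S` in the digraph with arc relation `A`. -/
noncomputable def closedOut {V : Type*} [Fintype V] [DecidableEq V]
    (A : V → V → Prop) (S : Finset V) : Finset V :=
  S ∪ @Finset.filter _ (fun v => ∃ u ∈ S, A u v) (Classical.decPred _) Finset.univ

/-- `S` is a majority out-dominating set: `|N⁺[S]| ≥ n/2`. -/
def IsMODS {V : Type*} [Fintype V] [DecidableEq V]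
    (A : V → V → Prop) (S : Finset V) : Prop :=
  2 * (closedOut A S).card ≥ Fintype.card V

/-- Set majority out-domination number `γ⁺ₘ`. -/
noncomputable def gammaM {V : Type*} [Fintype V] [DecidableEq V]
    (A : V → V → Prop) : ℕ :=
  sInf {k | ∃ S : Finset V, IsMODS A S ∧ S.card = k}

/-- Out-domination number `γ⁺`. -/
noncomputable def gammaPlus {V : Type*} [Fintype V] [DecidableEq V]
    (A : V → V → Prop) : ℕ :=
  sInf {k | ∃ S : Finset V, closedOut A S = Finset.univ ∧ S.card = k}

/-- Out-degree of a vertex. -/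
noncomputable def outDeg {V : Type*} [Fintype V] [DecidableEq V]
    (A : V → V → Prop) (v : V) : ℕ :=
  (@Finset.filter _ (fun w => A v w) (Classical.decPred _) Finset.univ).card

/-- Maximum out-degree `Δ⁺`. -/
noncomputable def DeltaPlus {V : Type*} [Fintype V] [DecidableEq V]
    (A : V → V → Prop) : ℕ :=
  Finset.univ.sup (outDeg A)


lemma closedOut_mono {V : Type*} [Fintype V] [DecidableEq V]
    (A : V → V → Prop) {S T : Finset V} (h : S ⊆ T) :
    closedOut A S ⊆ closedOut A T := by
  classical
  apply Finset.union_subset_union h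
  intro x hx
  simp only [Finset.mem_filter] at hx ⊢
  obtain ⟨_, u, hu, hAu⟩ := hx
  exact ⟨Finset.mem_univ x, u, h hu, hAu⟩

lemma self_subset_closedOut {V : Type*} [Fintype V] [DecidableEq V]
    (A : V → V → Prop) (S : Finset V) : S ⊆ closedOut A S :=
  Finset.subset_union_left

lemma closedOut_singleton_card {V : Type*} [Fintype V] [DecidableEq V]
    (A : V → V → Prop) (v : V) (hv : ¬ A v v) :
    (closedOut A {v}).card = 1 + outDeg A v := by
  classical
  unfold closedOut outDeg
  have hfe : (@Finset.filter _ (fun w => ∃ u ∈ ({v} : Finset V), A u w)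
      (Classical.decPred _) Finset.univ)
      = (@Finset.filter _ (fun w => A v w) (Classical.decPred _) Finset.univ) := by
    ext x
    simp only [Finset.mem_filter]
    constructor
    · rintro ⟨_, u, hu, h⟩
      rw [Finset.mem_singleton] at hu
      subst hu
      exact ⟨Finset.mem_univ x, h⟩
    · rintro ⟨_, h⟩
      exact ⟨Finset.mem_univ x, v, Finset.mem_singleton_self v, h⟩
  rw [hfe, Finset.card_union_of_disjoint, Finset.card_singleton]
  simp only [Finset.disjoint_singleton_left, Finset.mem_filter]
  rintro ⟨-, h⟩
  exact hv h

lemma closedOut_empty {V : Type*} [Fintype V] [DecidableEq V]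
    (A : V → V → Prop) : closedOut A (∅ : Finset V) = ∅ := by
  classical
  rw [Finset.eq_empty_iff_forall_notMem]
  intro x hx
  rw [closedOut] at hx
  simp only [Finset.mem_union, Finset.mem_filter] at hx
  rcases hx with h | ⟨-, u, hu, -⟩
  · exact Finset.notMem_empty x h
  · exact Finset.notMem_empty u hu

/-- Either `γ⁺ₘ(D) = 1` or `γ⁺ₘ(D) ≤ ⌈n/2⌉ - Δ⁺(D)`. -/
theorem stmt12 {V : Type*} [Fintype V] [DecidableEq V] [Nonempty V]
    (A : V → V → Prop) (hloop : ∀ v, ¬ A v v) :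
    gammaM A = 1 ∨ gammaM A ≤ (Fintype.card V + 1) / 2 - DeltaPlus A := by
  classical
  have hn1 : 1 ≤ Fintype.card V := Fintype.card_pos
  obtain ⟨v, -, hv⟩ := Finset.exists_mem_eq_sup (Finset.univ : Finset V)
    Finset.univ_nonempty (outDeg A)
  have hvcard : (closedOut A {v}).card = 1 + DeltaPlus A := by
    rw [closedOut_singleton_card A v (hloop v), DeltaPlus, hv]
  by_cases hcase : Fintype.card V ≤ 2 * (1 + DeltaPlus A)
  · left
    have hmem : 1 ∈ {k | ∃ S : Finset V, IsMODS A S ∧ S.card = k} := by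
      refine ⟨{v}, ?_, Finset.card_singleton v⟩
      unfold IsMODS
      rw [hvcard]; exact hcase
    have h01 : gammaM A ≤ 1 := Nat.sInf_le hmem
    have h10 : gammaM A ≠ 0 := by
      intro h0
      have hm := Nat.sInf_mem (⟨1, hmem⟩ : Set.Nonempty
        {k | ∃ S : Finset V, IsMODS A S ∧ S.card = k})
      rw [show sInf {k | ∃ S : Finset V, IsMODS A S ∧ S.card = k} = gammaM A from rfl,
        h0] at hm
      obtain ⟨S, hS, hc⟩ := hm
      rw [Finset.card_eq_zero] at hc
      subst hc
      unfold IsMODS at hS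
      rw [closedOut_empty] at hS
      simp only [Finset.card_empty, Nat.mul_zero] at hS
      omega
    omega
  · right
    push_neg at hcase
    have hcompl : (Fintype.card V + 1) / 2 - (DeltaPlus A + 1)
        ≤ ((closedOut A {v})ᶜ).card := by
      rw [Finset.card_compl, hvcard]
      omega
    obtain ⟨T, hTsub, hTcard⟩ := Finset.exists_subset_card_eq hcompl
    have hclosed : closedOut A {v} ∪ T ⊆ closedOut A (insert v T) := by
      apply Finset.union_subset
      · exact closedOut_mono A (by simp)
      · exact (Finset.subset_insert v T).trans (self_subset_closedOut A _)
    have hdisj : Disjoint (closedOut A {v}) T := by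
      rw [Finset.disjoint_right]
      intro x hx
      have := hTsub hx
      simpa using this
    have hclc : (Fintype.card V + 1) / 2 ≤ (closedOut A (insert v T)).card := by
      have h1 : (closedOut A {v} ∪ T).card ≤ (closedOut A (insert v T)).card :=
        Finset.card_le_card hclosed
      rw [Finset.card_union_of_disjoint hdisj, hvcard, hTcard] at h1
      omega
    have hMODS : IsMODS A (insert v T) := by
      unfold IsMODS
      omega
    have hle : gammaM A ≤ (insert v T).card := Nat.sInf_le ⟨_, hMODS, rfl⟩
    have hci := Finset.card_insert_le v T
    omega
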